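/- arXiv:1709.06268 — 2 statements merged into one kernel-verified Lean document; each statement's English description precedes it below -/
import Mathlib

section
/- Let λ > −1/2 be real, let k ∈ ℕ, and let ν ≥ k be real. Then for every x ∈ (−1,1), the k-th derivative of ʳG_ν^{(λ)} at x equals (−1)^k · ((−ν)_k (ν+2λ)_k)/(2^k (λ+1/2)_k) · ʳG_{ν−k}^{(λ+k)}(x), where (a)_k = a(a+1)⋯(a+k−1) is the Pochhammer symbol. -/
open Real

/-- Pochhammer symbol `(a)_n = a (a+1) ⋯ (a+n-1)` for a real base. -/
noncomputable def poch (a : ℝ) (n : ℕ) : ℝ := ∏ i ∈ Finset.range n, (a + (i : ℝ))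

/-- The right generalized Gegenbauer function of fractional degree. -/
noncomputable def rG (lam nu x : ℝ) : ℝ :=
  ∑' j : ℕ, (poch (-nu) j * poch (nu + 2 * lam) j /
    ((j.factorial : ℝ) * poch (lam + 1 / 2) j)) * ((1 - x) / 2) ^ j

/-!
With `t = (1 - x) / 2`, `rG lam nu` is a power series `∑ c_j t^j` whose coefficient ratio
`c_{j+1} / c_j` tends to `1`, so it converges for `|t| < 1` and may be differentiated termwise.
The identity `(j + 1) c_{j+1}(λ, ν) = (-ν)(ν + 2λ) / (λ + 1/2) · c_j(λ + 1, ν - 1)` shows that the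
derivative is again a GGF-F, with parameters `(λ + 1, ν - 1)`; induction on `k` does the rest.
-/

open Filter Topology

theorem summable_abs_mul_pow_of_tendsto_ratio {c ρ : ℕ → ℝ} {l r : ℝ}
    (hc : ∀ j, c (j + 1) = ρ j * c j) (hρ : Tendsto ρ atTop (𝓝 l)) (hlr : |l| * r < 1)
    (hr : 0 ≤ r) : Summable fun j => |c j| * r ^ j := by
  have hq : |l| * r < (|l| * r + 1) / 2 := by linarith
  refine summable_of_ratio_norm_eventually_le (by linarith : (|l| * r + 1) / 2 < 1) ?_
  filter_upwards [((hρ.abs.mul_const r).eventually_lt_const hq)] with j hj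
  have hstep : |c (j + 1)| * r ^ (j + 1) = |ρ j| * r * (|c j| * r ^ j) := by
    rw [hc, abs_mul, pow_succ]; ring
  rw [norm_of_nonneg (by positivity), norm_of_nonneg (by positivity), hstep]
  exact mul_le_mul_of_nonneg_right hj.le (by positivity)

theorem hasDerivAt_tsum_mul_pow {c : ℕ → ℝ} {r t : ℝ}
    (hc : Summable fun j => |(j + 1) * c (j + 1)| * r ^ j) (ht : |t| < r) :
    HasDerivAt (fun y => ∑' j, c j * y ^ j) (∑' j, (j + 1) * c (j + 1) * t ^ j) t := by
  set u : ℕ → ℝ := fun j => |j * c j| * r ^ (j - 1)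
  have hu : Summable u :=
    (summable_nat_add_iff 1).1 <| hc.congr fun j => by
      simp only [u, Nat.cast_add_one, Nat.add_sub_cancel]
  have hbound : ∀ j, ∀ y ∈ Set.Ioo (-r) r, ‖c j * (j * y ^ (j - 1))‖ ≤ u j := by
    intro j y hy
    rw [norm_mul, norm_mul, norm_pow, ← mul_assoc, mul_comm ‖c j‖, ← norm_mul]
    exact mul_le_mul_of_nonneg_left
      (pow_le_pow_left₀ (norm_nonneg y) (abs_lt.2 hy).le _) (norm_nonneg _)
  have ht' : t ∈ Set.Ioo (-r) r := abs_lt.1 ht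
  have hzero : (0 : ℝ) ∈ Set.Ioo (-r) r :=
    ⟨by linarith [abs_nonneg t], by linarith [abs_nonneg t]⟩
  have hderiv := hasDerivAt_tsum_of_isPreconnected hu isOpen_Ioo isPreconnected_Ioo
    (fun j y _ => (hasDerivAt_pow j y).const_mul (c j)) hbound hzero
    ((summable_nat_add_iff 1).1 (by simp)) ht'
  refine hderiv.congr_deriv ?_
  rw [(Summable.of_norm_bounded hu fun j => hbound j t ht').tsum_eq_zero_add]
  simp [mul_comm, mul_left_comm]

theorem poch_zero (a : ℝ) : poch a 0 = 1 := Finset.prod_range_zero _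

theorem poch_succ_right (a : ℝ) (n : ℕ) : poch a (n + 1) = poch a n * (a + n) :=
  Finset.prod_range_succ _ _

theorem poch_succ_left (a : ℝ) (n : ℕ) : poch a (n + 1) = a * poch (a + 1) n := by
  rw [poch, Finset.prod_range_succ', mul_comm, Nat.cast_zero, add_zero, poch]
  congr 1
  refine Finset.prod_congr rfl fun i _ => ?_
  push_cast
  ring

noncomputable def ggfCoeff (lam nu : ℝ) (j : ℕ) : ℝ :=
  poch (-nu) j * poch (nu + 2 * lam) j / ((j.factorial : ℝ) * poch (lam + 1 / 2) j)

theorem rG_eq_tsum_ggfCoeff (lam nu x : ℝ) :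
    rG lam nu x = ∑' j, ggfCoeff lam nu j * ((1 - x) / 2) ^ j := rfl

noncomputable def ggfDerivCoeff (lam nu : ℝ) (k : ℕ) : ℝ :=
  (-1 : ℝ) ^ k * (poch (-nu) k * poch (nu + 2 * lam) k) / (2 ^ k * poch (lam + 1 / 2) k)

/- Division by zero makes the coefficient identities below hold for every `lam`: once
`poch (lam + 1 / 2) j` vanishes, all later coefficients are `0` on both sides. -/
theorem ggfCoeff_succ (lam nu : ℝ) (j : ℕ) :
    ggfCoeff lam nu (j + 1) =
      (-nu + j) / (1 + j) * ((nu + 2 * lam + j) / (lam + 1 / 2 + j)) * ggfCoeff lam nu j := by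
  simp only [ggfCoeff, poch_succ_right, Nat.factorial_succ, Nat.cast_mul, Nat.cast_add_one]
  rw [div_mul_div_comm, div_mul_div_comm]
  congr 1 <;> ring

theorem summable_ggfCoeff (lam nu : ℝ) {r : ℝ} (hr0 : 0 ≤ r) (hr1 : r < 1) :
    Summable fun j => |ggfCoeff lam nu j| * r ^ j := by
  have hratio := (tendsto_add_mul_div_add_mul_atTop_nhds (-nu) 1 1 one_ne_zero).mul
    (tendsto_add_mul_div_add_mul_atTop_nhds (nu + 2 * lam) (lam + 1 / 2) 1 one_ne_zero)
  simp only [one_mul, div_one] at hratio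
  exact summable_abs_mul_pow_of_tendsto_ratio (ggfCoeff_succ lam nu) hratio
    (by rwa [abs_one, one_mul]) hr0

theorem succ_mul_ggfCoeff_succ (lam nu : ℝ) (j : ℕ) :
    (j + 1) * ggfCoeff lam nu (j + 1) =
      -nu * (nu + 2 * lam) / (lam + 1 / 2) * ggfCoeff (lam + 1) (nu - 1) j := by
  have hj : (j : ℝ) + 1 ≠ 0 := by positivity
  simp only [ggfCoeff, poch_succ_left, Nat.factorial_succ, Nat.cast_mul, Nat.cast_add_one]
  rw [show -nu + 1 = -(nu - 1) by ring, show nu + 2 * lam + 1 = nu - 1 + 2 * (lam + 1) by ring,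
    show lam + 1 / 2 + 1 = lam + 1 + 1 / 2 by ring]
  field_simp

theorem ggfDerivCoeff_succ (lam nu : ℝ) (k : ℕ) :
    ggfDerivCoeff lam nu (k + 1) = ggfDerivCoeff lam nu 1 * ggfDerivCoeff (lam + 1) (nu - 1) k := by
  rw [ggfDerivCoeff, ggfDerivCoeff, ggfDerivCoeff, div_mul_div_comm]
  simp only [poch_succ_left, poch_zero]
  rw [show -nu + 1 = -(nu - 1) by ring, show nu + 2 * lam + 1 = nu - 1 + 2 * (lam + 1) by ring,
    show lam + 1 / 2 + 1 = lam + 1 + 1 / 2 by ring]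
  congr 1 <;> ring

theorem hasDerivAt_rG (lam nu : ℝ) {x : ℝ} (hx : x ∈ Set.Ioo (-1 : ℝ) 1) :
    HasDerivAt (rG lam nu) (ggfDerivCoeff lam nu 1 * rG (lam + 1) (nu - 1) x) x := by
  have ht : |(1 - x) / 2| < 1 := abs_lt.2 ⟨by linarith [hx.2], by linarith [hx.1]⟩
  obtain ⟨r, htr, hr1⟩ := exists_between ht
  have hsum : Summable fun j : ℕ => |(j + 1) * ggfCoeff lam nu (j + 1)| * r ^ j := by
    simp_rw [succ_mul_ggfCoeff_succ, abs_mul, mul_assoc]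
    exact (summable_ggfCoeff (lam + 1) (nu - 1) ((abs_nonneg _).trans htr.le) hr1).mul_left _
  have hlin : HasDerivAt (fun y : ℝ => (1 - y) / 2) (-1 / 2) x :=
    ((hasDerivAt_id x).const_sub 1).div_const 2
  refine ((hasDerivAt_tsum_mul_pow hsum htr).comp x hlin).congr_deriv ?_
  simp_rw [succ_mul_ggfCoeff_succ, mul_assoc, tsum_mul_left, ← rG_eq_tsum_ggfCoeff]
  simp only [ggfDerivCoeff, poch_succ_left, poch_zero, pow_one, mul_one, ← div_div]
  ring

theorem iteratedDeriv_rG (lam nu : ℝ) (k : ℕ) {x : ℝ} (hx : x ∈ Set.Ioo (-1 : ℝ) 1) :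
    iteratedDeriv k (rG lam nu) x = ggfDerivCoeff lam nu k * rG (lam + k) (nu - k) x := by
  induction k generalizing lam nu with
  | zero => simp [ggfDerivCoeff, poch_zero]
  | succ k ih =>
    have hderiv : Set.EqOn (deriv (rG lam nu))
        (fun y => ggfDerivCoeff lam nu 1 * rG (lam + 1) (nu - 1) y) (Set.Ioo (-1) 1) :=
      fun y hy => (hasDerivAt_rG lam nu hy).deriv
    rw [iteratedDeriv_succ', hderiv.iteratedDeriv_of_isOpen isOpen_Ioo k hx,
      iteratedDeriv_const_mul_field, ih, ggfDerivCoeff_succ lam nu k, mul_assoc, Nat.cast_succ,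
      add_comm (k : ℝ) 1, ← add_assoc, ← sub_sub]

theorem ggf_iterated_deriv_general (lam : ℝ) (k : ℕ) (nu : ℝ)
    (x : ℝ) (hx : x ∈ Set.Ioo (-1 : ℝ) 1) :
    iteratedDeriv k (rG lam nu) x =
      (-1 : ℝ) ^ k * (poch (-nu) k * poch (nu + 2 * lam) k) /
          (2 ^ k * poch (lam + 1 / 2) k) *
        rG (lam + k) (nu - k) x :=
  iteratedDeriv_rG lam nu k hx

/-- The `k`-th derivative of a GGF-F is again a GGF-F, with shifted parameters. -/
theorem ggf_iterated_deriv (lam : ℝ) (hlam : -(1 / 2) < lam) (k : ℕ) (nu : ℝ)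
    (hnu : (k : ℝ) ≤ nu) (x : ℝ) (hx : x ∈ Set.Ioo (-1 : ℝ) 1) :
    iteratedDeriv k (rG lam nu) x =
      (-1 : ℝ) ^ k * (poch (-nu) k * poch (nu + 2 * lam) k) /
          (2 ^ k * poch (lam + 1 / 2) k) *
        rG (lam + k) (nu - k) x :=
  ggf_iterated_deriv_general lam k nu x hx
end

section
/- For every φ ∈ (0,π) and every t > 0, (t²/4) cos²φ · (cosh(t/2))^{4/3} + sin²φ · (cosh t)^{2/3} < |g(φ,t)|² < (t²/4) cos²φ · (cosh(t/2))⁴ + sin²φ · (cosh t)², where |g(φ,t)|² = (cos²φ (cosh t − 1)² + sin²φ sinh²t)/t². -/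
/-!
Since `cosh t - 1 = 2 sinh² (t/2)`, the square `|g(φ,t)|²` equals
`cos² φ · (t²/4) (sinh s / s)⁴ + sin² φ · (sinh t / t)²` with `s = t/2`, and `cos² φ + sin² φ = 1`.
Both bounds therefore reduce to `cosh x ^ (1/3) < sinh x / x < cosh x` for `x > 0` (the right
half is `tanh x < x`, the left half Lazarević's inequality), each proved by showing that the
difference of the two sides is strictly increasing from `0`.
-/

open Real

/-- `g(φ,t) = (cos(φ − it) − cos φ)/t` for `t ≠ 0`, with `g(φ,0) = i sin φ`. -/
noncomputable def gfun (φ t : ℝ) : ℂ :=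
  if t = 0 then Complex.I * (Real.sin φ : ℂ)
  else (Complex.cos ((φ : ℂ) - Complex.I * (t : ℂ)) - Complex.cos (φ : ℂ)) / (t : ℂ)

theorem Real.sinh_lt_mul_cosh {x : ℝ} (hx : 0 < x) : sinh x < x * cosh x := by
  have hmono : StrictMonoOn (fun y ↦ y * cosh y - sinh y) (Set.Ici 0) := by
    refine strictMonoOn_of_deriv_pos (convex_Ici 0) (by fun_prop) fun y hy ↦ ?_
    rw [interior_Ici, Set.mem_Ioi] at hy
    have hd : HasDerivAt (fun y ↦ y * cosh y - sinh y) (1 * cosh y + y * sinh y - cosh y) y :=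
      ((hasDerivAt_id y).mul (hasDerivAt_cosh y)).sub (hasDerivAt_sinh y)
    simpa [hd.deriv] using mul_pos hy (sinh_pos_iff.2 hy)
  simpa using hmono Set.self_mem_Ici hx.le hx

theorem Real.mul_cosh_rpow_one_div_three_lt_sinh {x : ℝ} (hx : 0 < x) :
    x * cosh x ^ (1 / 3 : ℝ) < sinh x := by
  have hmono : StrictMonoOn (fun y ↦ sinh y * cosh y ^ (-1 / 3 : ℝ) - y) (Set.Ici 0) := by
    refine strictMonoOn_of_deriv_pos (convex_Ici 0)
      ((continuous_sinh.mul (continuous_cosh.rpow_const fun y ↦ Or.inl (cosh_pos y).ne')).sub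
        continuous_id).continuousOn fun y hy ↦ ?_
    rw [interior_Ici, Set.mem_Ioi] at hy
    have hc : 0 < cosh y := cosh_pos y
    set a := cosh y ^ (-1 / 3 : ℝ) with ha
    have hd : HasDerivAt (fun y ↦ sinh y * cosh y ^ (-1 / 3 : ℝ) - y)
        (cosh y * a + sinh y * (sinh y * (-1 / 3) * cosh y ^ (-1 / 3 - 1 : ℝ)) - 1) y :=
      ((hasDerivAt_sinh y).mul ((hasDerivAt_cosh y).rpow_const (Or.inl hc.ne'))).sub
        (hasDerivAt_id y)
    have ha₀ : 0 < a := rpow_pos_of_pos hc _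
    have ha₁ : a < 1 := rpow_lt_one_of_one_lt_of_neg (one_lt_cosh.2 hy.ne') (by norm_num)
    have hca : cosh y = (a ^ 3)⁻¹ := by
      rw [ha, ← rpow_natCast, ← rpow_mul hc.le]; norm_num [rpow_neg_one]
    rw [hd.deriv, rpow_sub_one hc.ne', ← ha,
      show sinh y * (sinh y * (-1 / 3) * (a / cosh y)) = -(sinh y ^ 2 * a / (3 * cosh y)) by ring,
      sinh_sq, hca]
    -- the derivative is `(2 - 3a² + a⁶) / (3a²) = (1 - a²)² (2 + a²) / (3a²)`
    have hpos : 0 < (1 - a ^ 2) ^ 2 * (2 + a ^ 2) := by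
      have : 0 < 1 - a ^ 2 := by nlinarith
      positivity
    field_simp
    nlinarith
  have h := hmono Set.self_mem_Ici hx.le hx
  simp only [sinh_zero, zero_mul, sub_zero, sub_pos] at h
  have hc : 0 < cosh x := cosh_pos x
  calc x * cosh x ^ (1 / 3 : ℝ)
      < sinh x * cosh x ^ (-1 / 3 : ℝ) * cosh x ^ (1 / 3 : ℝ) := by gcongr
    _ = sinh x := by rw [mul_assoc, ← rpow_add hc]; norm_num

theorem Real.sinh_div_self_pow_lt_cosh_pow {x : ℝ} (hx : 0 < x) {n : ℕ} (hn : n ≠ 0) :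
    (sinh x / x) ^ n < cosh x ^ n := by
  refine pow_lt_pow_left₀ ?_ (div_pos (sinh_pos_iff.2 hx) hx).le hn
  rw [div_lt_iff₀' hx]
  exact sinh_lt_mul_cosh hx

theorem Real.cosh_rpow_lt_sinh_div_self_pow {x : ℝ} (hx : 0 < x) {n : ℕ} (hn : n ≠ 0) :
    cosh x ^ ((n : ℝ) / 3) < (sinh x / x) ^ n := by
  rw [show (n : ℝ) / 3 = 1 / 3 * n by ring, rpow_mul (cosh_pos x).le, rpow_natCast]
  refine pow_lt_pow_left₀ ?_ (by positivity) hn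
  rw [lt_div_iff₀' hx]
  exact mul_cosh_rpow_one_div_three_lt_sinh hx

theorem Real.cos_sq_mul_add_sin_sq_mul_lt {a a' b b' : ℝ} (φ : ℝ) (ha : a < a') (hb : b < b') :
    cos φ ^ 2 * a + sin φ ^ 2 * b < cos φ ^ 2 * a' + sin φ ^ 2 * b' := by
  have hm := lt_min (sub_pos.2 ha) (sub_pos.2 hb)
  nlinarith [sin_sq_add_cos_sq φ, mul_le_mul_of_nonneg_left (min_le_left (a' - a) (b' - b))
    (sq_nonneg (cos φ)), mul_le_mul_of_nonneg_left (min_le_right (a' - a) (b' - b))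
    (sq_nonneg (sin φ))]

theorem Real.cosh_sub_one_eq_two_mul_sinh_half_sq (x : ℝ) : cosh x - 1 = 2 * sinh (x / 2) ^ 2 := by
  have h := cosh_two_mul (x / 2)
  rw [mul_div_cancel₀ x two_ne_zero, cosh_sq] at h
  linarith

theorem gfun_of_ne_zero (φ : ℝ) {t : ℝ} (ht : t ≠ 0) :
    gfun φ t = ((cos φ * (cosh t - 1) : ℝ) + (sin φ * sinh t : ℝ) * Complex.I) / t := by
  rw [gfun, if_neg ht, mul_comm Complex.I, Complex.cos_sub, Complex.cos_mul_I, Complex.sin_mul_I]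
  push_cast
  ring

theorem norm_gfun_sq (φ : ℝ) {t : ℝ} (ht : t ≠ 0) :
    ‖gfun φ t‖ ^ 2 = (cos φ ^ 2 * (cosh t - 1) ^ 2 + sin φ ^ 2 * sinh t ^ 2) / t ^ 2 := by
  rw [gfun_of_ne_zero φ ht, norm_div, Complex.norm_real, Real.norm_eq_abs, Complex.norm_add_mul_I,
    div_pow, sq_abs, sq_sqrt (by positivity)]
  ring

theorem norm_gfun_sq_eq_sinh_div_self (φ : ℝ) {t : ℝ} (ht : t ≠ 0) :
    ‖gfun φ t‖ ^ 2 = cos φ ^ 2 * (t ^ 2 / 4 * (sinh (t / 2) / (t / 2)) ^ 4) +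
      sin φ ^ 2 * (sinh t / t) ^ 2 := by
  rw [norm_gfun_sq φ ht, cosh_sub_one_eq_two_mul_sinh_half_sq]
  field_simp
  ring

theorem gfun_sq_bounds_general (φ t : ℝ) (ht : 0 < t) :
    t ^ 2 / 4 * Real.cos φ ^ 2 * Real.cosh (t / 2) ^ ((4 : ℝ) / 3) +
        Real.sin φ ^ 2 * Real.cosh t ^ ((2 : ℝ) / 3) <
      ‖gfun φ t‖ ^ 2 ∧
    ‖gfun φ t‖ ^ 2 <
      t ^ 2 / 4 * Real.cos φ ^ 2 * Real.cosh (t / 2) ^ (4 : ℕ) +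
        Real.sin φ ^ 2 * Real.cosh t ^ (2 : ℕ) ∧
    ‖gfun φ t‖ ^ 2 =
      (Real.cos φ ^ 2 * (Real.cosh t - 1) ^ 2 + Real.sin φ ^ 2 * Real.sinh t ^ 2) / t ^ 2 := by
  have hs : 0 < t / 2 := half_pos ht
  have hq : 0 < t ^ 2 / 4 := by positivity
  refine ⟨?_, ?_, norm_gfun_sq φ ht.ne'⟩ <;> rw [norm_gfun_sq_eq_sinh_div_self φ ht.ne']
  · have h₄ := cosh_rpow_lt_sinh_div_self_pow hs four_ne_zero
    have h₂ := cosh_rpow_lt_sinh_div_self_pow ht two_ne_zero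
    push_cast at h₄ h₂
    linarith [cos_sq_mul_add_sin_sq_mul_lt φ (mul_lt_mul_of_pos_left h₄ hq) h₂]
  · linarith [cos_sq_mul_add_sin_sq_mul_lt φ
      (mul_lt_mul_of_pos_left (sinh_div_self_pow_lt_cosh_pow hs four_ne_zero) hq)
      (sinh_div_self_pow_lt_cosh_pow ht two_ne_zero)]

/-- Two-sided bounds for `|g(φ,t)|²`. -/
theorem gfun_sq_bounds (φ t : ℝ) (hφ : φ ∈ Set.Ioo 0 π) (ht : 0 < t) :
    t ^ 2 / 4 * Real.cos φ ^ 2 * Real.cosh (t / 2) ^ ((4 : ℝ) / 3) +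
        Real.sin φ ^ 2 * Real.cosh t ^ ((2 : ℝ) / 3) <
      ‖gfun φ t‖ ^ 2 ∧
    ‖gfun φ t‖ ^ 2 <
      t ^ 2 / 4 * Real.cos φ ^ 2 * Real.cosh (t / 2) ^ (4 : ℕ) +
        Real.sin φ ^ 2 * Real.cosh t ^ (2 : ℕ) ∧
    ‖gfun φ t‖ ^ 2 =
      (Real.cos φ ^ 2 * (Real.cosh t - 1) ^ 2 + Real.sin φ ^ 2 * Real.sinh t ^ 2) / t ^ 2 :=
  gfun_sq_bounds_general φ t ht
end
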